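/- arXiv:2309.09576 — 2 statements merged into one kernel-verified Lean document; each statement's English description precedes it below -/
import Mathlib

section
/- Let E be a finite-dimensional real inner product space, F₁ and F₂ subspaces of E, and π₁, π₂ the orthogonal projections onto F₁ and F₂ respectively. Then F₁ is the internal direct sum of the image of π₁ restricted to F₂ and the kernel of π₂ restricted to F₁, i.e. F₁ = im(π₁|_{F₂}) ⊕ ker(π₂|_{F₁}). -/
/-!
Since `π₁` is self-adjoint and fixes `F₁` pointwise, a vector `v ∈ F₁` is orthogonal to `π₁ w`
exactly when it is orthogonal to `w`. Hence, inside `F₁`, the orthogonal complement of `π₁(F₂)`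
is `F₁ ∩ F₂ᗮ = F₁ ∩ ker π₂`, and the claim is the orthogonal decomposition of `F₁` along its
subspace `π₁(F₂)`.
-/

namespace Submodule

variable {𝕜 E : Type*} [RCLike 𝕜] [NormedAddCommGroup E] [InnerProductSpace 𝕜 E]

theorem map_starProjection_le (K U : Submodule 𝕜 E) [K.HasOrthogonalProjection] :
    U.map K.starProjection.toLinearMap ≤ K :=
  LinearMap.map_le_range.trans (range_starProjection K).le

theorem orthogonal_map_starProjection_inf (K U : Submodule 𝕜 E) [K.HasOrthogonalProjection] :
    (U.map K.starProjection.toLinearMap)ᗮ ⊓ K = Uᗮ ⊓ K := by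
  ext v
  simp only [mem_inf, mem_orthogonal, mem_map, and_congr_left_iff]
  intro hv
  have hfix (u : E) : inner 𝕜 (K.starProjection u) v = inner 𝕜 u v := by
    rw [inner_starProjection_left_eq_right, starProjection_eq_self_iff.mpr hv]
  simp only [ContinuousLinearMap.coe_coe, forall_exists_index, and_imp,
    forall_apply_eq_imp_iff₂, hfix]

theorem sup_map_starProjection_inf_orthogonal (K U : Submodule 𝕜 E) [K.HasOrthogonalProjection]
    [(U.map K.starProjection.toLinearMap).HasOrthogonalProjection] :
    U.map K.starProjection.toLinearMap ⊔ K ⊓ Uᗮ = K := by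
  rw [inf_comm, ← orthogonal_map_starProjection_inf]
  exact sup_orthogonal_inf_of_hasOrthogonalProjection (map_starProjection_le K U)

theorem disjoint_map_starProjection_inf_orthogonal (K U : Submodule 𝕜 E)
    [K.HasOrthogonalProjection] :
    Disjoint (U.map K.starProjection.toLinearMap) (K ⊓ Uᗮ) := by
  rw [inf_comm, ← orthogonal_map_starProjection_inf]
  exact (orthogonal_disjoint _).mono_right inf_le_left

end Submodule

open Submodule in
/-- Projector lemma: F₁ = im(π₁|_{F₂}) ⊕ ker(π₂|_{F₁}). -/
theorem stmt_0 {E : Type*} [NormedAddCommGroup E] [InnerProductSpace ℝ E]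
    [FiniteDimensional ℝ E] (F₁ F₂ : Submodule ℝ E) :
    let π₁ : E →ₗ[ℝ] E := F₁.subtype ∘ₗ (Submodule.orthogonalProjectionOnto F₁ : E →L[ℝ] F₁).toLinearMap
    let π₂ : E →ₗ[ℝ] E := F₂.subtype ∘ₗ (Submodule.orthogonalProjectionOnto F₂ : E →L[ℝ] F₂).toLinearMap
    F₁ = Submodule.map π₁ F₂ ⊔ (F₁ ⊓ LinearMap.ker π₂) ∧
      Disjoint (Submodule.map π₁ F₂) (F₁ ⊓ LinearMap.ker π₂) := by
  intro π₁ π₂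
  have hπ₁ : π₁ = F₁.starProjection.toLinearMap := rfl
  have hπ₂ : LinearMap.ker π₂ = F₂ᗮ := ker_starProjection F₂
  rw [hπ₁, hπ₂]
  exact ⟨(sup_map_starProjection_inf_orthogonal F₁ F₂).symm,
    disjoint_map_starProjection_inf_orthogonal F₁ F₂⟩
end

section
/- With notation as in the projector lemma: if v ∈ F₁ satisfies π₂(v) = 0 and v = π₁(w) for some w ∈ F₂, then v = 0. In other words, im(π₁|_{F₂}) ∩ ker(π₂|_{F₁}) = {0}. -/
namespace Submodule

variable {𝕜 E : Type*} [RCLike 𝕜] [NormedAddCommGroup E] [InnerProductSpace 𝕜 E]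

/-- `‖π w‖² = re ⟪π w, w⟫`, which vanishes since `π w ⟂ K ∋ w`. -/
theorem starProjection_eq_zero_of_mem_of_mem_orthogonal (U : Submodule 𝕜 E)
    [U.HasOrthogonalProjection] {K : Submodule 𝕜 E} {w : E} (hw : w ∈ K)
    (h : U.starProjection w ∈ Kᗮ) : U.starProjection w = 0 := by
  have hnorm : ‖U.orthogonalProjectionOnto w‖ ^ 2 = 0 := by
    rw [← re_inner_starProjection_eq_normSq, inner_left_of_mem_orthogonal hw h, map_zero]
  rw [starProjection_apply, coe_eq_zero, ← norm_eq_zero]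
  exact pow_eq_zero_iff two_ne_zero |>.mp hnorm

end Submodule

/-- In the projector lemma: im(π₁|_{F₂}) ∩ ker(π₂|_{F₁}) = {0}. -/
theorem stmt_2 {E : Type*} [NormedAddCommGroup E] [InnerProductSpace ℝ E]
    [FiniteDimensional ℝ E] (F₁ F₂ : Submodule ℝ E) :
    let π₁ : E →ₗ[ℝ] E := F₁.subtype ∘ₗ (F₁.orthogonalProjectionOnto : E →L[ℝ] F₁).toLinearMap
    let π₂ : E →ₗ[ℝ] E := F₂.subtype ∘ₗ (F₂.orthogonalProjectionOnto : E →L[ℝ] F₂).toLinearMap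
    ∀ v w : E, w ∈ F₂ → v = π₁ w → π₂ v = 0 → v = 0 := by
  rintro π₁ π₂ v w hw rfl hπ₂
  exact F₁.starProjection_eq_zero_of_mem_of_mem_orthogonal hw
    (F₂.starProjection_apply_eq_zero_iff.mp hπ₂)
end
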